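/- Let n ≥ 1, let k = (k_1,...,k_n) ∈ ℤ^n and let 1 ≤ i < j ≤ n. Let L_n(k) denote the sum of the signs of all generalized Gelfand-Tsetlin patterns of order n with bottom row k, and let k' be obtained from k by replacing k_i with k_j + j − i and k_j with k_i + i − j. Then L_n(k) = −L_n(k'). -/

import Mathlib

/-- A generalized Gelfand-Tsetlin pattern of order `n`: a triangular array
`(a_{i,j})_{1 ≤ j ≤ i ≤ n}` (row `i : Fin n` has `i + 1` entries) such that for every
entry `a_{i,j}` with `i ≤ n - 1`: if `a_{i+1,j} ≤ a_{i+1,j+1}` then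
`a_{i+1,j} ≤ a_{i,j} ≤ a_{i+1,j+1}`, and if `a_{i+1,j} > a_{i+1,j+1}` then
`a_{i+1,j} > a_{i,j} > a_{i+1,j+1}`. -/
def IsGenGT {n : ℕ} (a : ∀ i : Fin n, Fin (i.1 + 1) → ℤ) : Prop :=
  ∀ i : Fin n, ∀ hi : i.1 + 1 < n, ∀ j : Fin (i.1 + 1),
    if a ⟨i.1 + 1, hi⟩ ⟨j.1, by have := j.isLt; show j.1 < i.1 + 1 + 1; omega⟩ ≤
        a ⟨i.1 + 1, hi⟩ ⟨j.1 + 1, by have := j.isLt; show j.1 + 1 < i.1 + 1 + 1; omega⟩ then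
      a ⟨i.1 + 1, hi⟩ ⟨j.1, by have := j.isLt; show j.1 < i.1 + 1 + 1; omega⟩ ≤ a i j ∧
        a i j ≤ a ⟨i.1 + 1, hi⟩ ⟨j.1 + 1, by have := j.isLt; show j.1 + 1 < i.1 + 1 + 1; omega⟩
    else
      a ⟨i.1 + 1, hi⟩ ⟨j.1 + 1, by have := j.isLt; show j.1 + 1 < i.1 + 1 + 1; omega⟩ < a i j ∧
        a i j < a ⟨i.1 + 1, hi⟩ ⟨j.1, by have := j.isLt; show j.1 < i.1 + 1 + 1; omega⟩

/-- The number of inversions of a generalized Gelfand-Tsetlin pattern: entries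
`a_{i,j}` with `a_{i+1,j} > a_{i+1,j+1}`. -/
noncomputable def genGTInvCount {n : ℕ} (a : ∀ i : Fin n, Fin (i.1 + 1) → ℤ) : ℕ :=
  ∑ i : Fin n,
    if hi : i.1 + 1 < n then
      (Finset.univ.filter (fun j : Fin (i.1 + 1) =>
        a ⟨i.1 + 1, hi⟩ ⟨j.1 + 1, by have := j.isLt; show j.1 + 1 < i.1 + 1 + 1; omega⟩ <
          a ⟨i.1 + 1, hi⟩ ⟨j.1, by have := j.isLt; show j.1 < i.1 + 1 + 1; omega⟩)).card
    else 0

/-- The bottom row (row `n`) of a triangular array equals `k`. -/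
def BottomRow {n : ℕ} (a : ∀ i : Fin n, Fin (i.1 + 1) → ℤ) (k : Fin n → ℤ) : Prop :=
  ∀ i : Fin n, i.1 + 1 = n → ∀ j : Fin (i.1 + 1),
    a i j = k ⟨j.1, by have := j.isLt; omega⟩

/-- The signed enumeration of all generalized Gelfand-Tsetlin patterns of order `n`
with bottom row `k`, each pattern counted with sign `(-1) ^ (number of inversions)`. -/
noncomputable def LgenGT (n : ℕ) (k : Fin n → ℤ) : ℤ :=
  ∑ᶠ a ∈ {a : ∀ i : Fin n, Fin (i.1 + 1) → ℤ | IsGenGT a ∧ BottomRow a k},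
    (-1 : ℤ) ^ genGTInvCount a

/-!
Removing the bottom row `k` of a pattern leaves a pattern whose bottom row `l` interlaces `k`,
and the entries of `l` sitting over a descent `kₜ > kₜ₊₁` are exactly the new inversions, so
`LgenGT (n + 1) k = ∑ₗ (∏ₜ intervalSign kₜ kₜ₊₁ lₜ) · LgenGT n l`.

Under the shifted adjacent swap `(kₛ, kₛ₊₁) ↦ (kₛ₊₁ + 1, kₛ - 1)` the factor at `s` changes
sign and, by telescoping, its two neighbours pick up shifted copies of it. Each resulting
correction term has a weight invariant under a shifted adjacent swap of `l`, under which
`LgenGT n` is antisymmetric by induction, so it vanishes and the sum changes sign. In the coordinates `kₜ + t` the shifted swaps are transpositions of neighbours,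
which generate the symmetric group, so `LgenGT n` transforms by the sign of any permutation of
the `kₜ + t`.
-/

open Finset Function Equiv

/-- At `x`: `1` if `a ≤ x ≤ b`, `-1` if `b < x < a`, and `0` otherwise. -/
def intervalSign (a b x : ℤ) : ℤ := (if x ≤ b then 1 else 0) - (if x ≤ a - 1 then 1 else 0)

lemma intervalSign_succ_pred (a b x : ℤ) :
    intervalSign (b + 1) (a - 1) x = -intervalSign a b x := by
  unfold intervalSign; split_ifs <;> omega

lemma intervalSign_add_right (a b c x : ℤ) :
    intervalSign c (b + 1) x = intervalSign c a x + intervalSign a b (x - 1) := by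
  unfold intervalSign; split_ifs <;> omega

lemma intervalSign_add_left (a b c x : ℤ) :
    intervalSign (a - 1) c x = intervalSign b c x + intervalSign a b (x + 1) := by
  unfold intervalSign; split_ifs <;> omega

lemma intervalSign_ne_zero_iff (a b x : ℤ) :
    intervalSign a b x ≠ 0 ↔ if a ≤ b then a ≤ x ∧ x ≤ b else b < x ∧ x < a := by
  unfold intervalSign; split_ifs <;> omega

lemma intervalSign_eq_of_ne_zero {a b x : ℤ} (h : intervalSign a b x ≠ 0) :
    intervalSign a b x = if b < a then -1 else 1 := by
  unfold intervalSign at h ⊢; split_ifs at h ⊢ <;> omega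

lemma finite_support_intervalSign (a b : ℤ) : (support (intervalSign a b)).Finite := by
  refine (Set.finite_Icc (min a (b + 1)) (max b (a - 1))).subset fun x hx => ?_
  simp only [mem_support, intervalSign] at hx
  simp only [Set.mem_Icc, le_max_iff, min_le_iff]
  split_ifs at hx <;> omega

section PermShift

variable {m : ℕ}

/-- `σ` permutes the coordinates of `k + (0, 1, …, m - 1)`, read back in the coordinates of `k`. -/
def permShift (σ : Perm (Fin m)) (k : Fin m → ℤ) : Fin m → ℤ :=
  fun t => k (σ t) + ((σ t).1 : ℤ) - (t.1 : ℤ)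

@[simp]
lemma permShift_one (k : Fin m → ℤ) : permShift 1 k = k := by
  funext t; simp [permShift]

lemma permShift_mul (σ τ : Perm (Fin m)) (k : Fin m → ℤ) :
    permShift (σ * τ) k = permShift τ (permShift σ k) := by
  funext t; simp only [permShift, Perm.mul_apply]; ring

lemma permShift_swap_apply_left (i j : Fin m) (k : Fin m → ℤ) :
    permShift (swap i j) k i = k j + ((j.1 : ℤ) - (i.1 : ℤ)) := by
  simp only [permShift, swap_apply_left]; ring

lemma permShift_swap_apply_right (i j : Fin m) (k : Fin m → ℤ) :
    permShift (swap i j) k j = k i + ((i.1 : ℤ) - (j.1 : ℤ)) := by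
  simp only [permShift, swap_apply_right]; ring

lemma permShift_swap_apply_of_ne {i j t : Fin m} (hi : t ≠ i) (hj : t ≠ j) (k : Fin m → ℤ) :
    permShift (swap i j) k t = k t := by
  simp only [permShift, swap_apply_of_ne_of_ne hi hj]; ring

lemma permShift_swap (i j : Fin m) (k : Fin m → ℤ) :
    permShift (swap i j) k = fun t =>
      if t = i then k j + ((j.1 : ℤ) - (i.1 : ℤ))
      else if t = j then k i + ((i.1 : ℤ) - (j.1 : ℤ))
      else k t := by
  funext t
  rcases eq_or_ne t i with rfl | hi
  · simp [permShift_swap_apply_left]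
  rcases eq_or_ne t j with rfl | hj
  · simp [permShift_swap_apply_right, hi]
  simp [permShift_swap_apply_of_ne hi hj, hi, hj]

lemma permShift_swap_castSucc_succ_apply_castSucc {n : ℕ} (p : Fin n) (k : Fin (n + 1) → ℤ) :
    permShift (swap p.castSucc p.succ) k p.castSucc = k p.succ + 1 := by
  simp [permShift_swap_apply_left]

lemma permShift_swap_castSucc_succ_apply_succ {n : ℕ} (p : Fin n) (k : Fin (n + 1) → ℤ) :
    permShift (swap p.castSucc p.succ) k p.succ = k p.castSucc - 1 := by
  simp [permShift_swap_apply_right]; ring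

end PermShift

section Transfer

variable {m : ℕ}

noncomputable def transfer (g : Fin m → ℤ → ℤ) (f : (Fin m → ℤ) → ℤ) : ℤ :=
  ∑ᶠ l, (∏ t, g t (l t)) * f l

lemma support_prod_mul_subset (g : Fin m → ℤ → ℤ) (f : (Fin m → ℤ) → ℤ) :
    (support fun l : Fin m → ℤ => (∏ t, g t (l t)) * f l) ⊆ Set.univ.pi fun t => support (g t) :=
  fun _ hl t _ => prod_ne_zero_iff.1 (left_ne_zero_of_mul hl) t (mem_univ t)

lemma finite_support_prod_mul {g : Fin m → ℤ → ℤ} (hg : ∀ t, (support (g t)).Finite)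
    (f : (Fin m → ℤ) → ℤ) : (support fun l : Fin m → ℤ => (∏ t, g t (l t)) * f l).Finite :=
  (Set.Finite.pi hg).subset (support_prod_mul_subset g f)

lemma prod_update_apply (g : Fin m → ℤ → ℤ) (t : Fin m) (u : ℤ → ℤ) (l : Fin m → ℤ) :
    ∏ r, update g t u r (l r) = u (l t) * ∏ r ∈ univ \ {t}, g r (l r) := by
  simp_rw [apply_update (fun r (h : ℤ → ℤ) => h (l r))]
  exact prod_update_of_mem (mem_univ t) _ _

lemma transfer_update_add {g : Fin m → ℤ → ℤ} (hg : ∀ t, (support (g t)).Finite) (t : Fin m)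
    {u v : ℤ → ℤ} (hu : (support u).Finite) (hv : (support v).Finite) (f : (Fin m → ℤ) → ℤ) :
    transfer (update g t (u + v)) f = transfer (update g t u) f + transfer (update g t v) f := by
  have hfin {w : ℤ → ℤ} (hw : (support w).Finite) (r : Fin m) :
      (support (update g t w r)).Finite := by
    rcases eq_or_ne r t with rfl | hr
    · simpa using hw
    · simpa [update_of_ne hr] using hg r
  unfold transfer
  rw [← finsum_add_distrib (finite_support_prod_mul (hfin hu) f)
    (finite_support_prod_mul (hfin hv) f)]
  refine finsum_congr fun l => ?_
  simp only [prod_update_apply, Pi.add_apply]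
  ring

lemma transfer_update_neg (g : Fin m → ℤ → ℤ) (t : Fin m) (u : ℤ → ℤ) (f : (Fin m → ℤ) → ℤ) :
    transfer (update g t (-u)) f = -transfer (update g t u) f := by
  unfold transfer
  rw [← finsum_neg_distrib]
  refine finsum_congr fun l => ?_
  simp only [prod_update_apply, Pi.neg_apply]
  ring

end Transfer

section AdjacentSwap

variable {n : ℕ} {f : (Fin (n + 1) → ℤ) → ℤ}

/-- The involution `permShift σ` of the summation variable fixes the weight and negates `f`. -/
lemma transfer_eq_zero_of_swap (p : Fin n)
    (hf : ∀ l, f (permShift (swap p.castSucc p.succ) l) = -f l) {g : Fin (n + 1) → ℤ → ℤ}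
    (hg : ∀ x y, g p.castSucc (y + 1) * g p.succ (x - 1) = g p.castSucc x * g p.succ y) :
    transfer g f = 0 := by
  set σ := swap p.castSucc p.succ
  have hσ (l : Fin (n + 1) → ℤ) : permShift σ (permShift σ l) = l := by
    rw [← permShift_mul, swap_mul_self, permShift_one]
  have hne : p.castSucc ≠ p.succ := Fin.castSucc_lt_succ.ne
  have hprod (l : Fin (n + 1) → ℤ) : ∏ t, g t (permShift σ l t) = ∏ t, g t (l t) := by
    rw [← prod_mul_prod_compl {p.castSucc, p.succ}, ← prod_mul_prod_compl {p.castSucc, p.succ},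
      prod_pair hne, prod_pair hne]
    congr 1
    · rw [permShift_swap_castSucc_succ_apply_castSucc, permShift_swap_castSucc_succ_apply_succ, hg]
    · refine prod_congr rfl fun t ht => ?_
      simp only [mem_compl, mem_insert, mem_singleton, not_or] at ht
      rw [permShift_swap_apply_of_ne ht.1 ht.2]
  have hneg : transfer g f = -transfer g f := by
    unfold transfer
    rw [← finsum_neg_distrib, ← finsum_comp_equiv ⟨permShift σ, permShift σ, hσ, hσ⟩]
    exact finsum_congr fun l => by simp [hprod, hf]
  omega

lemma transfer_add_shift_left
    (hf : ∀ (p : Fin n) l, f (permShift (swap p.castSucc p.succ) l) = -f l)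
    {G : Fin (n + 1) → ℤ → ℤ} (hG : ∀ t, (support (G t)).Finite) {h : ℤ → ℤ}
    (hh : (support h).Finite) (s : Fin (n + 1)) (hGs : G s = -h) :
    transfer (fun t => if t.1 + 1 = s.1 then G t + fun x => h (x - 1) else G t) f =
      transfer G f := by
  induction s using Fin.cases with
  | zero => simp
  | succ p =>
    have hfam : (fun t : Fin (n + 1) => if t.1 + 1 = p.succ.1 then G t + fun x => h (x - 1)
        else G t) = update G p.castSucc (G p.castSucc + fun x => h (x - 1)) := by
      funext t
      rcases eq_or_ne t p.castSucc with rfl | ht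
      · simp
      · have ht' : t.1 ≠ p.1 := fun e => ht (Fin.ext e)
        simp [update_of_ne ht, ht']
    have hne : p.succ ≠ p.castSucc := Fin.castSucc_lt_succ.ne'
    rw [hfam, transfer_update_add hG _ (hG _) (hh.preimage sub_left_injective.injOn),
      update_eq_self, add_eq_left]
    refine transfer_eq_zero_of_swap p (hf p) fun x y => ?_
    simp only [update_self, update_of_ne hne, hGs, Pi.neg_apply, add_sub_cancel_right]
    ring

lemma transfer_add_shift_right
    (hf : ∀ (p : Fin n) l, f (permShift (swap p.castSucc p.succ) l) = -f l)
    {G : Fin (n + 1) → ℤ → ℤ} (hG : ∀ t, (support (G t)).Finite) {h : ℤ → ℤ}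
    (hh : (support h).Finite) (s : Fin (n + 1)) (hGs : G s = -h) :
    transfer (fun t => if t.1 = s.1 + 1 then G t + fun x => h (x + 1) else G t) f =
      transfer G f := by
  induction s using Fin.lastCases with
  | last => simp [Nat.ne_of_lt (Fin.is_lt _)]
  | cast p =>
    have hfam : (fun t : Fin (n + 1) => if t.1 = p.castSucc.1 + 1 then G t + fun x => h (x + 1)
        else G t) = update G p.succ (G p.succ + fun x => h (x + 1)) := by
      funext t
      rcases eq_or_ne t p.succ with rfl | ht
      · simp
      · have ht' : t.1 ≠ p.1 + 1 := fun e => ht (Fin.ext (by simp [e]))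
        simp [update_of_ne ht, ht']
    have hne : p.castSucc ≠ p.succ := Fin.castSucc_lt_succ.ne
    rw [hfam, transfer_update_add hG _ (hG _) (hh.preimage (add_left_injective 1).injOn),
      update_eq_self, add_eq_left]
    refine transfer_eq_zero_of_swap p (hf p) fun x y => ?_
    simp only [update_self, update_of_ne hne, hGs, Pi.neg_apply, sub_add_cancel]
    ring

end AdjacentSwap

section InterlaceWeight

variable {n : ℕ}

def interlaceWeight (k : Fin (n + 2) → ℤ) (t : Fin (n + 1)) : ℤ → ℤ :=
  intervalSign (k t.castSucc) (k t.succ)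

lemma finite_support_interlaceWeight (k : Fin (n + 2) → ℤ) (t : Fin (n + 1)) :
    (support (interlaceWeight k t)).Finite :=
  finite_support_intervalSign _ _

variable (k : Fin (n + 2) → ℤ) (s : Fin (n + 1))

local notation "k'" => permShift (swap s.castSucc s.succ) k

lemma interlaceWeight_permShift_swap_self :
    interlaceWeight k' s = -interlaceWeight k s := by
  funext x
  simp only [interlaceWeight, permShift_swap_castSucc_succ_apply_castSucc,
    permShift_swap_castSucc_succ_apply_succ, intervalSign_succ_pred, Pi.neg_apply]

lemma interlaceWeight_permShift_swap_of_succ_eq {t : Fin (n + 1)} (ht : t.1 + 1 = s.1) :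
    interlaceWeight k' t = interlaceWeight k t + fun x => interlaceWeight k s (x - 1) := by
  have hts : t.succ = s.castSucc := Fin.ext (by simpa using ht)
  funext x
  rw [interlaceWeight, interlaceWeight, hts, permShift_swap_castSucc_succ_apply_castSucc,
    permShift_swap_apply_of_ne (Fin.ext_iff.not.2 (by simp; omega))
      (Fin.ext_iff.not.2 (by simp; omega)), Pi.add_apply, intervalSign_add_right]
  rfl

lemma interlaceWeight_permShift_swap_of_eq_succ {t : Fin (n + 1)} (ht : t.1 = s.1 + 1) :
    interlaceWeight k' t = interlaceWeight k t + fun x => interlaceWeight k s (x + 1) := by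
  have hts : t.castSucc = s.succ := Fin.ext (by simpa using ht)
  funext x
  rw [interlaceWeight, interlaceWeight, hts, permShift_swap_castSucc_succ_apply_succ,
    permShift_swap_apply_of_ne (Fin.ext_iff.not.2 (by simp; omega))
      (Fin.ext_iff.not.2 (by simp; omega)), Pi.add_apply, intervalSign_add_left]
  rfl

lemma interlaceWeight_permShift_swap_of_ne {t : Fin (n + 1)} (ht : t.1 ≠ s.1)
    (ht₁ : t.1 + 1 ≠ s.1) (ht₂ : t.1 ≠ s.1 + 1) : interlaceWeight k' t = interlaceWeight k t := by
  rw [interlaceWeight, interlaceWeight,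
    permShift_swap_apply_of_ne (Fin.ext_iff.not.2 (by simpa using ht))
      (Fin.ext_iff.not.2 (by simpa using ht₂)),
    permShift_swap_apply_of_ne (Fin.ext_iff.not.2 (by simpa using ht₁))
      (Fin.ext_iff.not.2 (by simpa using ht))]

theorem transfer_interlaceWeight_permShift_swap {f : (Fin (n + 1) → ℤ) → ℤ}
    (hf : ∀ (p : Fin n) l, f (permShift (swap p.castSucc p.succ) l) = -f l) :
    transfer (interlaceWeight k') f = -transfer (interlaceWeight k) f := by
  set h := interlaceWeight k s
  set G₀ := update (interlaceWeight k) s (-h)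
  set G₁ := fun t : Fin (n + 1) => if t.1 + 1 = s.1 then G₀ t + fun x => h (x - 1) else G₀ t
  have hh : (support h).Finite := finite_support_interlaceWeight k s
  have hG₀ (t : Fin (n + 1)) : (support (G₀ t)).Finite := by
    rcases eq_or_ne t s with rfl | hts
    · simpa [G₀] using hh
    · simpa [G₀, update_of_ne hts] using finite_support_interlaceWeight k t
  have hG₁ (t : Fin (n + 1)) : (support (G₁ t)).Finite := by
    simp only [G₁]
    split_ifs
    · exact ((hG₀ t).union (hh.preimage sub_left_injective.injOn)).subset (support_add _ _)
    · exact hG₀ t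
  have hG₁s : G₁ s = -h := by simp [G₁, G₀]
  have hweight : interlaceWeight k' =
      fun t => if t.1 = s.1 + 1 then G₁ t + fun x => h (x + 1) else G₁ t := by
    funext t
    rcases eq_or_ne t s with rfl | hts
    · rw [if_neg (by omega), hG₁s, interlaceWeight_permShift_swap_self]
    have hG₀t : G₀ t = interlaceWeight k t := update_of_ne hts _ _
    by_cases ht₂ : t.1 = s.1 + 1
    · rw [if_pos ht₂, interlaceWeight_permShift_swap_of_eq_succ k s ht₂]
      simp only [G₁, if_neg (show t.1 + 1 ≠ s.1 by omega), hG₀t]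
      rfl
    rw [if_neg ht₂]
    by_cases ht₁ : t.1 + 1 = s.1
    · rw [interlaceWeight_permShift_swap_of_succ_eq k s ht₁]
      simp only [G₁, if_pos ht₁, hG₀t]
      rfl
    · rw [interlaceWeight_permShift_swap_of_ne k s (fun e => hts (Fin.ext e)) ht₁ ht₂]
      simp only [G₁, if_neg ht₁, hG₀t]
  rw [hweight, transfer_add_shift_right hf hG₁ hh s hG₁s,
    transfer_add_shift_left hf hG₀ hh s (update_self ..), transfer_update_neg, update_eq_self]

end InterlaceWeight

noncomputable def signedCount : (n : ℕ) → (Fin (n + 1) → ℤ) → ℤ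
  | 0, _ => 1
  | n + 1, k => transfer (interlaceWeight k) (signedCount n)

theorem signedCount_permShift_swap_castSucc_succ :
    ∀ {n : ℕ} (p : Fin n) (k : Fin (n + 1) → ℤ),
      signedCount n (permShift (swap p.castSucc p.succ) k) = -signedCount n k
  | 0, p, _ => p.elim0
  | _ + 1, p, k =>
    transfer_interlaceWeight_permShift_swap k p signedCount_permShift_swap_castSucc_succ

theorem signedCount_permShift {n : ℕ} (σ : Perm (Fin (n + 1))) (k : Fin (n + 1) → ℤ) :
    signedCount n (permShift σ k) = Perm.sign σ * signedCount n k := by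
  have hσ : σ ∈ Submonoid.closure (Set.range fun p : Fin n => swap p.castSucc p.succ) := by
    rw [Perm.mclosure_swap_castSucc_succ]
    exact Submonoid.mem_top σ
  induction hσ using Submonoid.closure_induction generalizing k with
  | mem _ hτ =>
    obtain ⟨p, rfl⟩ := hτ
    rw [signedCount_permShift_swap_castSucc_succ, Perm.sign_swap Fin.castSucc_lt_succ.ne]
    simp
  | one => simp
  | mul τ υ _ _ hτ hυ =>
    rw [permShift_mul, hυ, hτ, Perm.sign_mul]
    push_cast
    ring

section Patterns

abbrev GTArray (n : ℕ) := ∀ i : Fin n, Fin (i.1 + 1) → ℤ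

def gtPatterns (n : ℕ) (k : Fin n → ℤ) : Set (GTArray n) :=
  {a | IsGenGT a ∧ BottomRow a k}

def descents {m : ℕ} (k : Fin (m + 1) → ℤ) : ℕ := #{t : Fin m | k t.succ < k t.castSucc}

variable {N : ℕ}

def interlacing (k : Fin (N + 2) → ℤ) : Set (Fin (N + 1) → ℤ) :=
  Set.univ.pi fun t => support (interlaceWeight k t)

lemma interlacing_finite (k : Fin (N + 2) → ℤ) : (interlacing k).Finite :=
  Set.Finite.pi fun t => finite_support_interlaceWeight k t

lemma prod_interlaceWeight_of_mem_interlacing {k : Fin (N + 2) → ℤ} {l : Fin (N + 1) → ℤ}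
    (hl : l ∈ interlacing k) : ∏ t, interlaceWeight k t (l t) = (-1) ^ descents k := by
  have hsign (t) : interlaceWeight k t (l t) = if k t.succ < k t.castSucc then -1 else 1 :=
    intervalSign_eq_of_ne_zero (hl t (Set.mem_univ t))
  rw [prod_congr rfl fun t _ => hsign t, prod_ite, prod_const, prod_const, one_pow, mul_one]
  rfl

lemma isGenGT_iff (a : GTArray (N + 1)) :
    IsGenGT a ↔
      ∀ (i : Fin N) (j : Fin (i.1 + 1)), interlaceWeight (a i.succ) j (a i.castSucc j) ≠ 0 := by
  simp only [interlaceWeight, intervalSign_ne_zero_iff]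
  exact ⟨fun h i j => h i.castSucc (by simp) j, fun h i hi j => h ⟨i.1, by omega⟩ j⟩

lemma genGTInvCount_eq (a : GTArray (N + 1)) :
    genGTInvCount a = ∑ i : Fin N, descents (a i.succ) := by
  rw [genGTInvCount, Fin.sum_univ_castSucc, dif_neg (by simp), add_zero]
  refine sum_congr rfl fun i _ => ?_
  rw [dif_pos (by simp)]
  rfl

lemma bottomRow_iff (a : GTArray (N + 1)) (k : Fin (N + 1) → ℤ) :
    BottomRow a k ↔ a (Fin.last N) = k := by
  constructor
  · intro h
    funext j
    exact h _ rfl j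
  · rintro rfl i hi j
    obtain rfl : i = Fin.last N := Fin.ext (by simp; omega)
    rfl

lemma snoc_castSucc_succ (b : GTArray (N + 1)) (k : Fin (N + 2) → ℤ) (i : Fin N) :
    (Fin.snoc b k : GTArray (N + 2)) i.castSucc.succ = b i.succ :=
  Fin.snoc_castSucc (α := fun i : Fin (N + 2) => Fin (i.1 + 1) → ℤ) (p := b) (x := k) i.succ

lemma isGenGT_snoc_iff (b : GTArray (N + 1)) (k : Fin (N + 2) → ℤ) :
    IsGenGT (Fin.snoc b k : GTArray (N + 2)) ↔ IsGenGT b ∧ b (Fin.last N) ∈ interlacing k := by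
  rw [isGenGT_iff, isGenGT_iff, Fin.forall_fin_succ']
  simp [snoc_castSucc_succ, interlacing]

lemma genGTInvCount_snoc (b : GTArray (N + 1)) (k : Fin (N + 2) → ℤ) :
    genGTInvCount (Fin.snoc b k : GTArray (N + 2)) = genGTInvCount b + descents k := by
  rw [genGTInvCount_eq, genGTInvCount_eq, Fin.sum_univ_castSucc]
  simp [snoc_castSucc_succ]

lemma gtPatterns_succ (k : Fin (N + 2) → ℤ) :
    gtPatterns (N + 2) k =
      (fun b => (Fin.snoc b k : GTArray (N + 2))) '' ⋃ l ∈ interlacing k, gtPatterns (N + 1) l := by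
  ext a
  simp only [gtPatterns, Set.mem_image, Set.mem_iUnion₂, Set.mem_ofPred_eq, bottomRow_iff,
    exists_prop]
  constructor
  · rintro ⟨ha, rfl⟩
    rw [← Fin.snoc_init_self a, isGenGT_snoc_iff] at ha
    exact ⟨Fin.init a, ⟨_, ha.2, ha.1, rfl⟩, Fin.snoc_init_self a⟩
  · rintro ⟨b, ⟨l, hl, hb, rfl⟩, rfl⟩
    exact ⟨(isGenGT_snoc_iff b k).2 ⟨hb, hl⟩, by simp⟩

lemma gtPatterns_one (k : Fin 1 → ℤ) :
    gtPatterns 1 k = {(Fin.snoc (fun i => i.elim0) k : GTArray 1)} := by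
  ext a
  simp only [gtPatterns, Set.mem_ofPred_eq, Set.mem_singleton_iff, bottomRow_iff, isGenGT_iff,
    IsEmpty.forall_iff, true_and]
  constructor
  · intro hk
    rw [← Fin.snoc_init_self a, hk]
    congr
    funext i
    exact i.elim0
  · rintro rfl
    exact Fin.snoc_last (α := fun i : Fin 1 => Fin (i.1 + 1) → ℤ) _ _

lemma gtPatterns_finite : ∀ {N : ℕ} (k : Fin (N + 1) → ℤ), (gtPatterns (N + 1) k).Finite
  | 0, k => by rw [gtPatterns_one]; exact Set.finite_singleton _
  | _ + 1, k => by
    rw [gtPatterns_succ]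
    exact ((interlacing_finite k).biUnion fun l _ => gtPatterns_finite l).image _

theorem LgenGT_eq_signedCount :
    ∀ {N : ℕ} (k : Fin (N + 1) → ℤ), LgenGT (N + 1) k = signedCount N k
  | 0, k => by
    change ∑ᶠ a ∈ gtPatterns 1 k, _ = 1
    simp [gtPatterns_one, genGTInvCount_eq]
  | N + 1, k => by
    have hdisj : (interlacing k).PairwiseDisjoint (gtPatterns (N + 1)) :=
      fun l₁ _ l₂ _ hne => Set.disjoint_left.2 fun b h₁ h₂ =>
        hne (((bottomRow_iff b l₁).1 h₁.2).symm.trans ((bottomRow_iff b l₂).1 h₂.2))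
    calc LgenGT (N + 2) k = ∑ᶠ a ∈ gtPatterns (N + 2) k, (-1) ^ genGTInvCount a := rfl
      _ = ∑ᶠ b ∈ ⋃ l ∈ interlacing k, gtPatterns (N + 1) l,
            (-1) ^ genGTInvCount (Fin.snoc b k : GTArray (N + 2)) := by
        rw [gtPatterns_succ]
        exact finsum_mem_image fun b₁ _ b₂ _ h => by simpa using congrArg Fin.init h
      _ = ∑ᶠ l ∈ interlacing k, ∑ᶠ b ∈ gtPatterns (N + 1) l,
            (-1) ^ descents k * (-1) ^ genGTInvCount b := by
        rw [finsum_mem_biUnion hdisj (interlacing_finite k) fun l _ => gtPatterns_finite l]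
        simp only [genGTInvCount_snoc, pow_add, mul_comm]
      _ = ∑ᶠ l ∈ interlacing k, (∏ t, interlaceWeight k t (l t)) * signedCount N l := by
        refine finsum_mem_congr rfl fun l hl => ?_
        rw [← mul_finsum_mem, prod_interlaceWeight_of_mem_interlacing hl,
          ← LgenGT_eq_signedCount l]
        rfl
      _ = signedCount (N + 1) k := by
        rw [signedCount, transfer]
        exact (finsum_mem_inter_support_eq' _ _ _ fun l hl =>
          iff_of_true (support_prod_mul_subset _ _ hl) (Set.mem_univ l)).trans (finsum_mem_univ _)

end Patterns

theorem gen_gt_pattern_shift_antisymmetry_general (n : ℕ) (k : Fin n → ℤ)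
    (i j : Fin n) (hij : i < j) :
    LgenGT n k =
      - LgenGT n (fun t =>
          if t = i then k j + ((j.1 : ℤ) - (i.1 : ℤ))
          else if t = j then k i + ((i.1 : ℤ) - (j.1 : ℤ))
          else k t) := by
  obtain ⟨N, rfl⟩ : ∃ N, n = N + 1 := ⟨n - 1, by have := i.isLt; omega⟩
  rw [← permShift_swap, LgenGT_eq_signedCount, LgenGT_eq_signedCount, signedCount_permShift,
    Perm.sign_swap hij.ne]
  simp

/-- Shift-antisymmetry of the signed enumeration of generalized Gelfand-Tsetlin
patterns: replacing `(k_i, k_j)` by `(k_j + j - i, k_i + i - j)` reverses the sign. -/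
theorem gen_gt_pattern_shift_antisymmetry (n : ℕ) (hn : 1 ≤ n) (k : Fin n → ℤ)
    (i j : Fin n) (hij : i < j) :
    LgenGT n k =
      - LgenGT n (fun t =>
          if t = i then k j + ((j.1 : ℤ) - (i.1 : ℤ))
          else if t = j then k i + ((i.1 : ℤ) - (j.1 : ℤ))
          else k t) :=
  gen_gt_pattern_shift_antisymmetry_general n k i j hij
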